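/- arXiv:2304.08099 — 5 statements merged into one kernel-verified Lean document; each statement's English description precedes it below -/
import Mathlib

section
/- Suppose the spec-map is bijective. Then for every x ∈ 𝒪_K there exists a positive integer n such that x^n ∈ 𝒪. -/
open NumberField

set_option synthInstance.maxHeartbeats 1000000
set_option maxHeartbeats 1000000

variable {K : Type*} [Field K] [NumberField K]

/-- A subring `O ⊆ 𝓞 K` is an *order* in `K` if its field of fractions is `K`;
equivalently, every element of `𝓞 K` admits a nonzero integer multiple lying in `O`. -/
def Subring.IsOrder (O : Subring (𝓞 K)) : Prop :=
  ∀ x : 𝓞 K, ∃ n : ℤ, n ≠ 0 ∧ (n : 𝓞 K) * x ∈ O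

/-- The conductor `𝔣 = {x ∈ 𝓞 K : x • 𝓞 K ⊆ O}` of a subring `O ⊆ 𝓞 K`,
as an ideal of `𝓞 K`. -/
def conductorIdeal (O : Subring (𝓞 K)) : Ideal (𝓞 K) where
  carrier := {x : 𝓞 K | ∀ y : 𝓞 K, x * y ∈ O}
  add_mem' := by
    intro a b ha hb y
    simpa [add_mul] using O.add_mem (ha y) (hb y)
  zero_mem' := by
    intro y
    simpa using O.zero_mem
  smul_mem' := by
    intro c x hx y
    simpa [smul_eq_mul, mul_assoc, mul_comm, mul_left_comm] using hx (c * y)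

/-- A commutative ring is *half-factorial* if every nonzero nonunit is a product of
irreducible elements, and any two factorizations of a nonzero nonunit into irreducibles
have the same length. -/
def IsHalfFactorialRing (R : Type*) [CommRing R] : Prop :=
  (∀ a : R, a ≠ 0 → ¬ IsUnit a →
      ∃ l : Multiset R, (∀ b ∈ l, Irreducible b) ∧ l.prod = a) ∧
  (∀ a : R, a ≠ 0 → ¬ IsUnit a →
      ∀ l₁ l₂ : Multiset R, (∀ b ∈ l₁, Irreducible b) → (∀ b ∈ l₂, Irreducible b) →
        l₁.prod = a → l₂.prod = a → Multiset.card l₁ = Multiset.card l₂)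

/-- The spec-map `𝔓 ↦ 𝔓 ∩ 𝒪` is a bijection between the nonzero prime ideals of `𝓞 K`
and the nonzero prime ideals of `O`. -/
def SpecMapBijective (O : Subring (𝓞 K)) : Prop :=
  Set.BijOn (fun P : Ideal (𝓞 K) => P.comap O.subtype)
    {P : Ideal (𝓞 K) | P.IsPrime ∧ P ≠ ⊥} {p : Ideal O | p.IsPrime ∧ p ≠ ⊥}

/-- The localization `𝒪_𝔭` of `O` at a prime ideal `𝔭` of `O`, realized as a subring
of `K`. -/
def locO (O : Subring (𝓞 K)) (p : Ideal O) (hp : p.IsPrime) : Subring K where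
  carrier := {x : K | ∃ a s : O, s ∉ p ∧
    x * algebraMap (𝓞 K) K (s : 𝓞 K) = algebraMap (𝓞 K) K (a : 𝓞 K)}
  one_mem' := ⟨1, 1, fun h => hp.ne_top ((Ideal.eq_top_iff_one _).mpr h), by simp⟩
  zero_mem' := ⟨0, 1, fun h => hp.ne_top ((Ideal.eq_top_iff_one _).mpr h), by simp⟩
  mul_mem' := by
    rintro x y ⟨a, s, hs, hx⟩ ⟨b, t, ht, hy⟩
    refine ⟨a * b, s * t, fun h => ((hp.mem_or_mem h).elim hs ht), ?_⟩
    push_cast [map_mul]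
    calc x * y * (algebraMap (𝓞 K) K s * algebraMap (𝓞 K) K t)
        = (x * algebraMap (𝓞 K) K s) * (y * algebraMap (𝓞 K) K t) := by ring
      _ = _ := by rw [hx, hy]
  add_mem' := by
    rintro x y ⟨a, s, hs, hx⟩ ⟨b, t, ht, hy⟩
    refine ⟨a * t + b * s, s * t, fun h => ((hp.mem_or_mem h).elim hs ht), ?_⟩
    push_cast [map_mul, map_add]
    calc (x + y) * (algebraMap (𝓞 K) K s * algebraMap (𝓞 K) K t)
        = (x * algebraMap (𝓞 K) K s) * algebraMap (𝓞 K) K t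
          + (y * algebraMap (𝓞 K) K t) * algebraMap (𝓞 K) K s := by ring
      _ = _ := by rw [hx, hy]
  neg_mem' := by
    rintro x ⟨a, s, hs, hx⟩
    exact ⟨-a, s, hs, by push_cast [map_neg]; rw [neg_mul, hx]⟩

/-- The localization `(𝒪_K)_𝔭 = 𝒪_K · (𝒪 ∖ 𝔭)⁻¹` of `𝓞 K` at the prime ideal `𝔭` of `O`
(the integral closure of `𝒪_𝔭`), realized as a subring of `K`. -/
def locOK (O : Subring (𝓞 K)) (p : Ideal O) (hp : p.IsPrime) : Subring K where
  carrier := {x : K | ∃ (a : 𝓞 K) (s : O), s ∉ p ∧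
    x * algebraMap (𝓞 K) K (s : 𝓞 K) = algebraMap (𝓞 K) K a}
  one_mem' := ⟨1, 1, fun h => hp.ne_top ((Ideal.eq_top_iff_one _).mpr h), by simp⟩
  zero_mem' := ⟨0, 1, fun h => hp.ne_top ((Ideal.eq_top_iff_one _).mpr h), by simp⟩
  mul_mem' := by
    rintro x y ⟨a, s, hs, hx⟩ ⟨b, t, ht, hy⟩
    refine ⟨a * b, s * t, fun h => ((hp.mem_or_mem h).elim hs ht), ?_⟩
    push_cast [map_mul]
    calc x * y * (algebraMap (𝓞 K) K s * algebraMap (𝓞 K) K t)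
        = (x * algebraMap (𝓞 K) K s) * (y * algebraMap (𝓞 K) K t) := by ring
      _ = _ := by rw [hx, hy]
  add_mem' := by
    rintro x y ⟨a, s, hs, hx⟩ ⟨b, t, ht, hy⟩
    refine ⟨a * t + b * s, s * t, fun h => ((hp.mem_or_mem h).elim hs ht), ?_⟩
    push_cast [map_mul, map_add]
    calc (x + y) * (algebraMap (𝓞 K) K s * algebraMap (𝓞 K) K t)
        = (x * algebraMap (𝓞 K) K s) * algebraMap (𝓞 K) K t
          + (y * algebraMap (𝓞 K) K t) * algebraMap (𝓞 K) K s := by ring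
      _ = _ := by rw [hx, hy]
  neg_mem' := by
    rintro x ⟨a, s, hs, hx⟩
    exact ⟨-a, s, hs, by push_cast [map_neg]; rw [neg_mul, hx]⟩

lemma locO_le_locOK (O : Subring (𝓞 K)) (p : Ideal O) (hp : p.IsPrime) :
    locO O p hp ≤ locOK O p hp := by
  rintro x ⟨a, s, hs, hx⟩
  exact ⟨(a : 𝓞 K), s, hs, hx⟩

/-- The subring `O + I` of `𝓞 K`, for a subring `O` and an ideal `I` of `𝓞 K`. -/
def orderPlus (O : Subring (𝓞 K)) (I : Ideal (𝓞 K)) : Subring (𝓞 K) where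
  carrier := {x : 𝓞 K | ∃ a ∈ O, ∃ b ∈ I, x = a + b}
  one_mem' := ⟨1, O.one_mem, 0, I.zero_mem, by ring⟩
  zero_mem' := ⟨0, O.zero_mem, 0, I.zero_mem, by ring⟩
  mul_mem' := by
    rintro x y ⟨a, ha, b, hb, rfl⟩ ⟨c, hc, d, hd, rfl⟩
    refine ⟨a * c, O.mul_mem ha hc, a * d + b * c + b * d,
      I.add_mem (I.add_mem (I.mul_mem_left a hd) (I.mul_mem_right c hb)) (I.mul_mem_left b hd), by ring⟩
  add_mem' := by
    rintro x y ⟨a, ha, b, hb, rfl⟩ ⟨c, hc, d, hd, rfl⟩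
    exact ⟨a + c, O.add_mem ha hc, b + d, I.add_mem hb hd, by ring⟩
  neg_mem' := by
    rintro x ⟨a, ha, b, hb, rfl⟩
    exact ⟨-a, O.neg_mem ha, -b, I.neg_mem hb, by ring⟩

lemma le_orderPlus (O : Subring (𝓞 K)) (I : Ideal (𝓞 K)) : O ≤ orderPlus O I :=
  fun a ha => ⟨a, ha, 0, I.zero_mem, by ring⟩

/-- The order `ℤ + f·𝒪_K` in `K`. -/
def zOrder (f : ℕ) : Subring (𝓞 K) where
  carrier := {x : 𝓞 K | ∃ (a : ℤ) (b : 𝓞 K), x = (a : 𝓞 K) + (f : 𝓞 K) * b}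
  one_mem' := ⟨1, 0, by push_cast; ring⟩
  zero_mem' := ⟨0, 0, by push_cast; ring⟩
  mul_mem' := by
    rintro x y ⟨a, b, rfl⟩ ⟨c, d, rfl⟩
    exact ⟨a * c, (a : 𝓞 K) * d + (c : 𝓞 K) * b + (f : 𝓞 K) * b * d, by push_cast; ring⟩
  add_mem' := by
    rintro x y ⟨a, b, rfl⟩ ⟨c, d, rfl⟩
    exact ⟨a + c, b + d, by push_cast; ring⟩
  neg_mem' := by
    rintro x ⟨a, b, rfl⟩
    exact ⟨-a, -b, by push_cast; ring⟩

/-- The natural homomorphism `𝒪_K^× → (𝒪_K/𝔣)^×/(𝒪/𝔣)^×`: reduction modulo the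
conductor `𝔣`, followed by the quotient by (the image of) `(𝒪/𝔣)^×`. -/
noncomputable def unitClassMap (O : Subring (𝓞 K)) :
    (𝓞 K)ˣ →*
      ((𝓞 K ⧸ conductorIdeal O)ˣ ⧸
        (Units.map (Subring.map (Ideal.Quotient.mk (conductorIdeal O)) O).subtype.toMonoidHom).range) :=
  (QuotientGroup.mk' _).comp (Units.map (Ideal.Quotient.mk (conductorIdeal O)).toMonoidHom)

/-! Since the conductor `𝔣` is nonzero, `𝓞 K ⧸ 𝔣` is finite and some power `e = x ^ N` is
idempotent modulo `𝔣`. The ideals `I = (e) + 𝔣` and `J = (e - 1) + 𝔣` are comaximal with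
`I ⊓ J ≤ 𝔣`. Every prime above `I` or `J` contains `𝔣`, hence is nonzero, so by lying over and
injectivity of the spec-map `I ∩ O` and `J ∩ O` are still comaximal. Writing `1 = a + b` with
`a ∈ I ∩ O`, `b ∈ J ∩ O` gives `a - e ∈ I ⊓ J ≤ 𝔣 ⊆ O`, hence `e ∈ O`. -/

theorem AddSubgroup.exists_ne_zero_forall_zsmul_mem {M : Type*} [AddCommGroup M]
    [Module.Finite ℤ M] (A : AddSubgroup M) (hA : ∀ x : M, ∃ n : ℤ, n ≠ 0 ∧ n • x ∈ A) :
    ∃ n : ℤ, n ≠ 0 ∧ ∀ x : M, n • x ∈ A := by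
  have htors : Module.IsTorsion ℤ (M ⧸ A.toIntSubmodule) := by
    intro x
    obtain ⟨x, rfl⟩ := Submodule.Quotient.mk_surjective _ x
    obtain ⟨n, hn, hnx⟩ := hA x
    exact ⟨⟨n, mem_nonZeroDivisors_of_ne_zero hn⟩, (Submodule.Quotient.mk_eq_zero _).mpr hnx⟩
  obtain ⟨n, hann, hn⟩ := Submodule.annihilator_top_inter_nonZeroDivisors htors
  refine ⟨n, nonZeroDivisors.ne_zero hn, fun x => ?_⟩
  have := Submodule.mem_annihilator.mp hann (Submodule.Quotient.mk x) Submodule.mem_top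
  rwa [← Submodule.Quotient.mk_smul, Submodule.Quotient.mk_eq_zero] at this

theorem exists_isIdempotentElem_pow {M : Type*} [Monoid M] [Finite M] (a : M) :
    ∃ n : ℕ, 0 < n ∧ IsIdempotentElem (a ^ n) := by
  obtain ⟨i, j, hij, hpow⟩ := Finite.exists_ne_map_eq_of_infinite (fun t : ℕ => a ^ t)
  wlog hlt : i < j generalizing i j
  · exact this j i hij.symm hpow.symm (hij.lt_or_gt.resolve_left hlt)
  set p := j - i
  have hperiod (t : ℕ) : a ^ (i + p * t) = a ^ i := by
    induction t with
    | zero => simp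
    | succ t ih =>
      rw [mul_add_one, ← add_assoc, pow_add, ih, ← pow_add, Nat.add_sub_cancel' hlt.le, ← hpow]
  have hp : 0 < p := Nat.sub_pos_of_lt hlt
  have hi : i ≤ p * (i + 1) := (Nat.le_succ i).trans (Nat.le_mul_of_pos_left _ hp)
  refine ⟨p * (i + 1), Nat.mul_pos hp i.succ_pos, ?_⟩
  calc a ^ (p * (i + 1)) * a ^ (p * (i + 1))
      = a ^ (i + p * (i + 1)) * a ^ (p * (i + 1) - i) := by
        rw [← pow_add, ← pow_add]; congr 1; omega
    _ = a ^ (p * (i + 1)) := by rw [hperiod, ← pow_add, Nat.add_sub_cancel' hi]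

namespace Ideal

variable {A B : Type*} [CommRing A] [CommRing B] [Algebra A B]

theorem sup_eq_top_of_mem_of_sub_one_mem {I J : Ideal B} {e : B} (he : e ∈ I) (he' : e - 1 ∈ J) :
    I ⊔ J = ⊤ :=
  (eq_top_iff_one _).mpr <| by simpa using sub_mem (mem_sup_left he) (mem_sup_right he')

theorem span_singleton_sup_inf_span_singleton_sub_one_sup_le {𝔣 : Ideal B} {e : B}
    (he : e * e - e ∈ 𝔣) : (span {e} ⊔ 𝔣) ⊓ (span {e - 1} ⊔ 𝔣) ≤ 𝔣 := by
  have hcop : (span {e} ⊔ 𝔣) ⊔ (span {e - 1} ⊔ 𝔣) = ⊤ :=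
    sup_eq_top_of_mem_of_sub_one_mem (mem_sup_left (mem_span_singleton_self e))
      (mem_sup_left (mem_span_singleton_self (e - 1)))
  rw [← mul_eq_inf_of_coprime hcop, sup_mul, mul_sup, mul_sup]
  refine sup_le (sup_le ?_ mul_le_right) (sup_le mul_le_left mul_le_right)
  rw [span_singleton_mul_span_singleton, span_le, Set.singleton_subset_iff]
  simpa [mul_sub] using he

theorem comap_sup_comap_eq_top_of_sup_eq_top [Algebra.IsIntegral A B] {I J : Ideal B}
    (hIJ : I ⊔ J = ⊤)
    (hinj : ∀ P Q : Ideal B, P.IsPrime → Q.IsPrime → I ≤ P → J ≤ Q →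
      P.comap (algebraMap A B) = Q.comap (algebraMap A B) → P = Q) :
    I.comap (algebraMap A B) ⊔ J.comap (algebraMap A B) = ⊤ := by
  by_contra hne
  obtain ⟨m, hm, hle⟩ := exists_le_maximal _ hne
  obtain ⟨P, hIP, hP, hPm⟩ := exists_ideal_over_prime_of_isIntegral m I (le_sup_left.trans hle)
  obtain ⟨Q, hJQ, hQ, hQm⟩ := exists_ideal_over_prime_of_isIntegral m J (le_sup_right.trans hle)
  obtain rfl := hinj P Q hP hQ hIP hJQ (hPm.trans hQm.symm)
  exact hP.ne_top (eq_top_iff.mpr (hIJ ▸ sup_le hIP hJQ))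

theorem exists_algebraMap_sub_mem_inf {I J : Ideal B}
    (hIJ : I.comap (algebraMap A B) ⊔ J.comap (algebraMap A B) = ⊤) {e : B} (he : e ∈ I)
    (he' : e - 1 ∈ J) : ∃ a : A, algebraMap A B a - e ∈ I ⊓ J := by
  obtain ⟨a, ha, b, hb, hab⟩ := Submodule.mem_sup.mp ((eq_top_iff_one _).mp hIJ)
  have hab' : algebraMap A B a + algebraMap A B b = 1 := by rw [← map_add, hab, map_one]
  refine ⟨a, sub_mem ha he, ?_⟩
  rw [show algebraMap A B a - e = -algebraMap A B b - (e - 1) by linear_combination hab']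
  exact sub_mem (neg_mem hb) he'

end Ideal

theorem conductorIdeal_ne_bot {O : Subring (𝓞 K)} (hO : O.IsOrder) : conductorIdeal O ≠ ⊥ := by
  obtain ⟨n, hn, hnO⟩ := O.toAddSubgroup.exists_ne_zero_forall_zsmul_mem fun x => by
    simpa [zsmul_eq_mul] using hO x
  have hmem : (n : 𝓞 K) ∈ conductorIdeal O := fun y => by simpa [zsmul_eq_mul] using hnO y
  exact fun h => hn (by simpa [h] using hmem)

/-- **Lemma 2.1.** If the spec-map is bijective, then for every `x ∈ 𝒪_K` there is a
positive integer `n` with `x^n ∈ 𝒪`. -/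
theorem pow_mem_of_specMapBijective (O : Subring (𝓞 K)) (hO : O.IsOrder)
    (hspec : SpecMapBijective O) :
    ∀ x : 𝓞 K, ∃ n : ℕ, 0 < n ∧ x ^ n ∈ O := by
  intro x
  set 𝔣 := conductorIdeal O
  have h𝔣 : 𝔣 ≠ ⊥ := conductorIdeal_ne_bot hO
  have : Finite (𝓞 K ⧸ 𝔣) := Ideal.finiteQuotientOfFreeOfNeBot 𝔣 h𝔣
  obtain ⟨N, hN, hidem⟩ := exists_isIdempotentElem_pow (Ideal.Quotient.mk 𝔣 x)
  refine ⟨N, hN, ?_⟩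
  set e := x ^ N
  have he : e * e - e ∈ 𝔣 := by
    rw [← Ideal.Quotient.eq_zero_iff_mem, map_sub, map_mul, map_pow, hidem.eq, sub_self]
  have heI : e ∈ Ideal.span {e} ⊔ 𝔣 := Ideal.mem_sup_left (Ideal.mem_span_singleton_self e)
  have heJ : e - 1 ∈ Ideal.span {e - 1} ⊔ 𝔣 :=
    Ideal.mem_sup_left (Ideal.mem_span_singleton_self (e - 1))
  have : Algebra.IsIntegral O (𝓞 K) := Algebra.IsIntegral.tower_top ℤ
  have hcomap := Ideal.comap_sup_comap_eq_top_of_sup_eq_top (A := O)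
    (Ideal.sup_eq_top_of_mem_of_sub_one_mem heI heJ) fun P Q hP hQ hIP hJQ hPQ => hspec.injOn
      ⟨hP, ne_bot_of_le_ne_bot h𝔣 (le_sup_right.trans hIP)⟩
      ⟨hQ, ne_bot_of_le_ne_bot h𝔣 (le_sup_right.trans hJQ)⟩ hPQ
  obtain ⟨a, ha⟩ := Ideal.exists_algebraMap_sub_mem_inf hcomap heI heJ
  have hdiff : (a : 𝓞 K) - e ∈ 𝔣 :=
    Ideal.span_singleton_sup_inf_span_singleton_sub_one_sup_le he ha
  simpa using O.sub_mem a.2 (hdiff 1)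
end

section
/- Let 𝔭_1,…,𝔭_r be the distinct prime ideals of 𝒪 containing the conductor 𝔣, and for each i ∈ {1,…,r} let 𝔣_i be the product, over the prime ideals 𝔓 of 𝒪_K lying over 𝔭_i, of the exact power of 𝔓 occurring in the prime factorization of 𝔣 (so that 𝔣 = 𝔣_1···𝔣_r and the 𝔣_i are pairwise coprime). Then for each i the subring 𝒪_i = 𝒪 + 𝔣_i of 𝒪_K is an order in K whose conductor equals 𝔣_i, and 𝒪 = ⋂_{i=1}^{r} 𝒪_i. -/
open NumberField

set_option synthInstance.maxHeartbeats 1000000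
set_option maxHeartbeats 1000000

variable {K : Type*} [Field K] [NumberField K]

/-!
For each `i` the contractions `𝔣_j ∩ 𝒪` are pairwise comaximal in `𝒪`: a maximal ideal
containing two of them contains the conductor, so it is some `𝔭_k`, and by going up both
`𝔣_i` and `𝔣_j` lie under primes over `𝔭_k`, forcing `i = k = j`. The Chinese remainder
theorem in `𝒪` then gives `v_i ∈ 𝒪` with `v_i ≡ 1 mod 𝔣_i` and `v_i ≡ 0 mod 𝔣_j` for `j ≠ i`.
Since `𝔣 = ⋂ 𝔣_j`, multiplication by `v_i` maps `𝒪 + 𝔣_i` into `𝒪`. Hence if `x` lies in the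
conductor of `𝒪 + 𝔣_i`, then `x v_i ∈ 𝔣 ⊆ 𝔣_i` and `x = x (1 - v_i) + x v_i ∈ 𝔣_i`; and if `x`
lies in every `𝒪 + 𝔣_i`, then `x = ∑ x v_i + x (1 - ∑ v_i) ∈ 𝒪` because `1 - ∑ v_i ∈ 𝔣`.
-/

open Function

theorem Ideal.exists_sub_one_mem_and_forall_mem_of_pairwise_isCoprime {R ι : Type*}
    [CommRing R] [Finite ι] {I : ι → Ideal R} (hI : Pairwise (IsCoprime on I)) (i : ι) :
    ∃ v : R, v - 1 ∈ I i ∧ ∀ j ≠ i, v ∈ I j := by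
  classical
  obtain ⟨v, hv⟩ := Ideal.exists_forall_sub_mem_ideal hI (Pi.single i 1)
  refine ⟨v, by simpa using hv i, fun j hj => ?_⟩
  simpa [Pi.single_eq_of_ne hj] using hv j

theorem Ideal.mul_mem_iInf_of_forall_ne_mem {R ι : Type*} [CommRing R] {I : ι → Ideal R}
    {i : ι} {b v : R} (hb : b ∈ I i) (hv : ∀ j ≠ i, v ∈ I j) : b * v ∈ ⨅ j, I j :=
  Ideal.mem_iInf.mpr fun j => by
    rcases eq_or_ne j i with rfl | hji
    exacts [Ideal.mul_mem_right _ _ hb, Ideal.mul_mem_left _ _ (hv j hji)]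

theorem Ideal.one_sub_sum_mem_iInf {R ι : Type*} [CommRing R] [Fintype ι] {I : ι → Ideal R}
    {v : ι → R} (hv1 : ∀ i, v i - 1 ∈ I i) (hv0 : ∀ i, ∀ j ≠ i, v i ∈ I j) :
    1 - ∑ i, v i ∈ ⨅ i, I i := by
  classical
  refine Ideal.mem_iInf.mpr fun i => ?_
  have hsplit : 1 - ∑ j, v j = -((v i - 1) + ∑ j ∈ Finset.univ.erase i, v j) := by
    rw [← Finset.add_sum_erase _ _ (Finset.mem_univ i)]; ring
  rw [hsplit]
  exact neg_mem (add_mem (hv1 i) (Ideal.sum_mem _ fun j hj =>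
    hv0 j i (Finset.ne_of_mem_erase hj).symm))

section LyingOver

variable {R S ι : Type*} [CommRing R] [CommRing S] [Algebra R S] [Algebra.IsIntegral R S]
  {p : ι → Ideal R} {I : ι → Ideal S}

theorem eq_of_comap_le_of_forall_comap_eq (hp : ∀ i, (p i).IsPrime)
    (hpinj : Function.Injective p)
    (hover : ∀ i, ∀ P : Ideal S, P.IsPrime → I i ≤ P → P.comap (algebraMap R S) = p i)
    {i k : ι} (h : (I i).comap (algebraMap R S) ≤ p k) : i = k := by
  have := hp k
  obtain ⟨P, hIP, hP, hPk⟩ := Ideal.exists_ideal_over_prime_of_isIntegral (p k) (I i) h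
  exact hpinj ((hover i P hP hIP).symm.trans hPk)

theorem pairwise_isCoprime_comap_of_forall_comap_eq (hp : ∀ i, (p i).IsPrime)
    (hpinj : Function.Injective p)
    (hover : ∀ i, ∀ P : Ideal S, P.IsPrime → I i ≤ P → P.comap (algebraMap R S) = p i)
    (hmax : ∀ i, ∀ m : Ideal R, m.IsMaximal → (I i).comap (algebraMap R S) ≤ m → ∃ k, m = p k) :
    Pairwise (IsCoprime on fun i => (I i).comap (algebraMap R S)) := by
  intro i j hij
  rw [Function.onFun, Ideal.isCoprime_iff_sup_eq]
  by_contra hne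
  obtain ⟨m, hm, hle⟩ := Ideal.exists_le_maximal _ hne
  obtain ⟨k, rfl⟩ := hmax i m hm (le_sup_left.trans hle)
  exact hij <| (eq_of_comap_le_of_forall_comap_eq hp hpinj hover (le_sup_left.trans hle)).trans
    (eq_of_comap_le_of_forall_comap_eq hp hpinj hover (le_sup_right.trans hle)).symm

end LyingOver

section OrderPlus

variable {F : Type*} [Field F] {O : Subring (𝓞 F)} {I : Ideal (𝓞 F)}

theorem Subring.IsOrder.mono {O' : Subring (𝓞 F)} (hO : O.IsOrder) (h : O ≤ O') :
    O'.IsOrder := fun x => (hO x).imp fun _ hn => ⟨hn.1, h hn.2⟩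

theorem mem_of_mem_conductorIdeal {x : 𝓞 F} (hx : x ∈ conductorIdeal O) : x ∈ O := by
  simpa using hx 1

theorem le_conductorIdeal_orderPlus : I ≤ conductorIdeal (orderPlus O I) :=
  fun x hx y => ⟨0, O.zero_mem, x * y, I.mul_mem_right y hx, (zero_add _).symm⟩

theorem mul_mem_of_mem_orderPlus {v : O} (hv : ∀ b ∈ I, b * v ∈ O) {x : 𝓞 F}
    (hx : x ∈ orderPlus O I) : x * v ∈ O := by
  obtain ⟨a, ha, b, hb, rfl⟩ := hx
  rw [add_mul]
  exact O.add_mem (O.mul_mem ha v.2) (hv b hb)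

theorem conductorIdeal_orderPlus_le (hI : conductorIdeal O ≤ I) {v : O}
    (hv : ∀ b ∈ I, b * v ∈ O) (hv1 : (v : 𝓞 F) - 1 ∈ I) :
    conductorIdeal (orderPlus O I) ≤ I := by
  intro x hx
  have hxv : x * v ∈ conductorIdeal O := fun y => by
    simpa only [mul_right_comm x] using mul_mem_of_mem_orderPlus hv (hx y)
  have hx_eq : x = x * v - x * (v - 1) := by ring
  rw [hx_eq]
  exact I.sub_mem (hI hxv) (I.mul_mem_left x hv1)

theorem iInf_orderPlus_eq {ι : Type*} [Fintype ι] {I : ι → Ideal (𝓞 F)} {v : ι → O}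
    (hv : ∀ i, ∀ b ∈ I i, b * v i ∈ O) (hsum : 1 - ∑ i, (v i : 𝓞 F) ∈ conductorIdeal O) :
    ⨅ i, orderPlus O (I i) = O := by
  refine le_antisymm (fun x hx => ?_)
    (le_iInf fun i a ha => ⟨a, ha, 0, (I i).zero_mem, (add_zero a).symm⟩)
  rw [Subring.mem_iInf] at hx
  have hx_eq : x = ∑ i, x * v i + (1 - ∑ i, (v i : 𝓞 F)) * x := by
    rw [← Finset.mul_sum]; ring
  rw [hx_eq]
  exact O.add_mem (O.sum_mem fun i _ => mul_mem_of_mem_orderPlus (hv i) (hx i))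
    (mem_of_mem_conductorIdeal (Ideal.mul_mem_right x _ hsum))

end OrderPlus

/-- Decomposition of an order into its irreducible components: if `𝔭_1, …, 𝔭_r` are the
prime ideals of `𝒪` containing the conductor `𝔣`, and `𝔣 = 𝔣_1 ⋯ 𝔣_r` with the `𝔣_i`
pairwise coprime and each `𝔣_i` a product of (exact powers of) the primes of `𝒪_K` lying
over `𝔭_i`, then each `𝒪_i = 𝒪 + 𝔣_i` is an order with conductor `𝔣_i`, and
`𝒪 = ⋂ᵢ 𝒪_i`. -/
theorem irreducible_components (O : Subring (𝓞 K)) (hO : O.IsOrder)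
    (r : ℕ) (p : Fin r → Ideal O) (hp : ∀ i, (p i).IsPrime)
    (hpinj : Function.Injective p)
    (hpall : ∀ q : Ideal O, q.IsPrime →
      ((conductorIdeal O).comap O.subtype ≤ q ↔ ∃ i, q = p i))
    (fi : Fin r → Ideal (𝓞 K))
    (hprod : conductorIdeal O = ∏ i, fi i)
    (hcop : ∀ i j, i ≠ j → fi i ⊔ fi j = ⊤)
    (hover : ∀ i, ∀ P : Ideal (𝓞 K), P.IsPrime → fi i ≤ P → P.comap O.subtype = p i) :
    (∀ i, (orderPlus O (fi i)).IsOrder ∧ conductorIdeal (orderPlus O (fi i)) = fi i) ∧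
      (⨅ i, orderPlus O (fi i)) = O := by
  have : Algebra.IsIntegral O (𝓞 K) :=
    ⟨fun x => (Algebra.IsIntegral.isIntegral (R := ℤ) x).tower_top⟩
  have hf : conductorIdeal O = ⨅ i, fi i := by
    simpa [hprod] using Ideal.prod_eq_iInf_of_pairwise_isCoprime (s := Finset.univ)
      fun i _ j _ hij => Ideal.isCoprime_iff_sup_eq.mpr (hcop i j hij)
  have hcomax := pairwise_isCoprime_comap_of_forall_comap_eq hp hpinj hover
    fun i m hm hle => (hpall m hm.isPrime).mp
      ((Ideal.comap_mono (hf ▸ iInf_le fi i)).trans hle)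
  choose v hv1 hv0 using
    Ideal.exists_sub_one_mem_and_forall_mem_of_pairwise_isCoprime hcomax
  have hv : ∀ i, ∀ b ∈ fi i, b * v i ∈ O := fun i b hb =>
    mem_of_mem_conductorIdeal (hf ▸ Ideal.mul_mem_iInf_of_forall_ne_mem hb (hv0 i))
  have hsum : 1 - ∑ i, (v i : 𝓞 K) ∈ conductorIdeal O :=
    hf ▸ Ideal.one_sub_sum_mem_iInf (v := fun i => (v i : 𝓞 K)) hv1 hv0
  refine ⟨fun i => ⟨hO.mono (le_orderPlus O (fi i)), ?_⟩, iInf_orderPlus_eq hv hsum⟩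
  exact le_antisymm (conductorIdeal_orderPlus_le (hf ▸ iInf_le fi i) (hv i) (hv1 i))
    le_conductorIdeal_orderPlus
end

section
/- Let 𝔭 be a prime ideal of 𝒪 containing the conductor 𝔣. Write 𝔣 = 𝔣̃·𝔤, where 𝔣̃ is the product of the exact powers of the prime ideals of 𝒪_K lying over 𝔭 occurring in the factorization of 𝔣 and 𝔤 is the complementary factor (so 𝔣̃ + 𝔤 = 𝒪_K). Let 𝒪̃ = 𝒪 + 𝔣̃ (an order in K with conductor 𝔣̃), and suppose 𝔭̃ is the unique prime ideal of 𝒪̃ containing 𝔣̃, with 𝔭̃ ∩ 𝒪 = 𝔭. Then the map x·𝒪_𝔭^× ↦ x·𝒪̃_𝔭̃^× is a well-defined isomorphism of monoids from (𝒪_𝔭 ∖ {0})/𝒪_𝔭^× onto (𝒪̃_𝔭̃ ∖ {0})/𝒪̃_𝔭̃^×. -/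
open NumberField

set_option synthInstance.maxHeartbeats 1000000
set_option maxHeartbeats 1000000

variable {K : Type*} [Field K] [NumberField K]

/-!
By going-up, a prime of `𝒪_K` containing `𝔤` lies over some prime of `𝒪`, never over `𝔭`;
hence `𝔤 ∩ 𝒪 ⊄ 𝔭` and there is `c ∈ 𝒪 ∩ 𝔤` with `c ∉ 𝔭`. Since `c·𝔣̃ ⊆ 𝔣̃𝔤 = 𝔣 ⊆ 𝒪`, we get
`c·𝒪̃ ⊆ 𝒪`, so every fraction `a/s` of `𝒪̃_𝔭̃` can be rewritten as `(ca)/(cs)` with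
`cs ∈ 𝒪 ∖ 𝔭`. Thus `𝒪_𝔭 = 𝒪̃_𝔭̃` as subrings of `K`, and the map on associates is induced by
this equality.
-/

def MulEquiv.associatesCongr {M N : Type*} [CommMonoid M] [CommMonoid N] (e : M ≃* N) :
    Associates M ≃* Associates N where
  toEquiv := Quotient.congr e.toEquiv fun a b =>
    ⟨Associated.map e, fun h =>
      (by simpa using Associated.map e.symm h : Associated a b)⟩
  map_mul' := by
    rintro ⟨a⟩ ⟨b⟩
    exact congrArg Associates.mk (map_mul e a b)

instance Subring.algebraIsIntegral {S : Type*} [CommRing S] [Algebra.IsIntegral ℤ S]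
    (O : Subring S) : Algebra.IsIntegral O S :=
  Algebra.IsIntegral.tower_top ℤ

lemma Ideal.exists_mem_comap_notMem_of_forall_comap_ne {R S : Type*} [CommRing R]
    [CommRing S] [Algebra R S] [Algebra.IsIntegral R S] (p : Ideal R) [p.IsPrime]
    (g : Ideal S) (hg : ∀ P : Ideal S, P.IsPrime → g ≤ P → P.comap (algebraMap R S) ≠ p) :
    ∃ c ∈ g.comap (algebraMap R S), c ∉ p := by
  by_contra! hle
  obtain ⟨P, hgP, hP, hPp⟩ := Ideal.exists_ideal_over_prime_of_isIntegral p g hle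
  exact hg P hP hgP hPp

lemma mul_mem_of_mem_orderPlus_s3 {K : Type*} [Field K] {O : Subring (𝓞 K)} {I : Ideal (𝓞 K)}
    {c : 𝓞 K} (hc : c ∈ O) (hcI : ∀ b ∈ I, c * b ∈ O) {y : 𝓞 K} (hy : y ∈ orderPlus O I) :
    c * y ∈ O := by
  obtain ⟨a, ha, b, hb, rfl⟩ := hy
  rw [mul_add]
  exact O.add_mem (O.mul_mem hc ha) (hcI b hb)

lemma locO_eq_of_mul_mem {K : Type*} [Field K] {O O' : Subring (𝓞 K)} (hOO' : O ≤ O')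
    {p : Ideal O} (hp : p.IsPrime) {p' : Ideal O'} (hp' : p'.IsPrime)
    (hpp' : p'.comap (Subring.inclusion hOO') = p) {c : O} (hcp : c ∉ p)
    (hcO' : ∀ y ∈ O', (c : 𝓞 K) * y ∈ O) :
    locO O p hp = locO O' p' hp' := by
  subst hpp'
  apply le_antisymm
  · rintro x ⟨a, s, hs, hx⟩
    exact ⟨Subring.inclusion hOO' a, Subring.inclusion hOO' s, hs, hx⟩
  · rintro x ⟨a, s, hs, hx⟩
    refine ⟨⟨_, hcO' a a.2⟩, ⟨_, hcO' s s.2⟩, fun hcs => ?_, ?_⟩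
    · have : Subring.inclusion hOO' c * s ∈ p' := hcs
      exact (hp'.mem_or_mem this).elim hcp hs
    · simp only [map_mul]
      rw [← hx]
      ring

theorem reduced_monoid_iso_of_component_general (O : Subring (𝓞 K))
    (p : Ideal O) (hp : p.IsPrime)
    (ft g : Ideal (𝓞 K))
    (hfg : conductorIdeal O = ft * g)
    (hg : ∀ P : Ideal (𝓞 K), P.IsPrime → g ≤ P → P.comap O.subtype ≠ p)
    (pt : Ideal (orderPlus O ft)) (hpt : pt.IsPrime)
    (hptp : ∀ (x : 𝓞 K) (hx : x ∈ O) (hx' : x ∈ orderPlus O ft),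
      (⟨x, hx'⟩ : orderPlus O ft) ∈ pt ↔ (⟨x, hx⟩ : O) ∈ p) :
    ∃ ψ : Associates ↥(locO O p hp) ≃* Associates ↥(locO (orderPlus O ft) pt hpt),
      ∀ (x : K) (h1 : x ∈ locO O p hp) (h2 : x ∈ locO (orderPlus O ft) pt hpt),
        ψ (Associates.mk (⟨x, h1⟩ : ↥(locO O p hp))) =
          Associates.mk (⟨x, h2⟩ : ↥(locO (orderPlus O ft) pt hpt)) := by
  obtain ⟨c, hcg, hcp⟩ := Ideal.exists_mem_comap_notMem_of_forall_comap_ne p g hg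
  have hcft : ∀ b ∈ ft, (c : 𝓞 K) * b ∈ O := fun b hb => by
    have hbc : b * c ∈ conductorIdeal O := hfg ▸ Ideal.mul_mem_mul hb hcg
    simpa [mul_comm] using hbc 1
  have hloc : locO O p hp = locO (orderPlus O ft) pt hpt :=
    locO_eq_of_mul_mem (le_orderPlus O ft) hp hpt (Ideal.ext fun x => hptp x x.2 _) hcp
      fun _ => mul_mem_of_mem_orderPlus_s3 c.2 hcft
  exact ⟨(RingEquiv.subringCongr hloc).toMulEquiv.associatesCongr, fun _ _ _ => rfl⟩

/-- **Lemma 3.1.** Passing from an order to the irreducible component at `𝔭` preserves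
the reduced monoid of the localization: the map `x·𝒪_𝔭^× ↦ x·𝒪̃_𝔭̃^×` is a well-defined
monoid isomorphism `(𝒪_𝔭∖{0})/𝒪_𝔭^× ≅ (𝒪̃_𝔭̃∖{0})/𝒪̃_𝔭̃^×` (stated here on the
monoids of associates). -/
theorem reduced_monoid_iso_of_component (O : Subring (𝓞 K)) (hO : O.IsOrder)
    (p : Ideal O) (hp : p.IsPrime) (hpf : (conductorIdeal O).comap O.subtype ≤ p)
    (ft g : Ideal (𝓞 K))
    (hfg : conductorIdeal O = ft * g) (hcop : ft ⊔ g = ⊤)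
    (hft : ∀ P : Ideal (𝓞 K), P.IsPrime → ft ≤ P → P.comap O.subtype = p)
    (hg : ∀ P : Ideal (𝓞 K), P.IsPrime → g ≤ P → P.comap O.subtype ≠ p)
    (hcond : conductorIdeal (orderPlus O ft) = ft)
    (pt : Ideal (orderPlus O ft)) (hpt : pt.IsPrime)
    (hptf : ft.comap (orderPlus O ft).subtype ≤ pt)
    (hptu : ∀ q : Ideal (orderPlus O ft), q.IsPrime →
      ft.comap (orderPlus O ft).subtype ≤ q → q = pt)
    (hptp : ∀ (x : 𝓞 K) (hx : x ∈ O) (hx' : x ∈ orderPlus O ft),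
      (⟨x, hx'⟩ : orderPlus O ft) ∈ pt ↔ (⟨x, hx⟩ : O) ∈ p) :
    ∃ ψ : Associates ↥(locO O p hp) ≃* Associates ↥(locO (orderPlus O ft) pt hpt),
      ∀ (x : K) (h1 : x ∈ locO O p hp) (h2 : x ∈ locO (orderPlus O ft) pt hpt),
        ψ (Associates.mk (⟨x, h1⟩ : ↥(locO O p hp))) =
          Associates.mk (⟨x, h2⟩ : ↥(locO (orderPlus O ft) pt hpt)) :=
  reduced_monoid_iso_of_component_general O p hp ft g hfg hg pt hpt hptp
end

section
/- Suppose |Pic(𝒪_K)| ≤ 2 and 𝒪·𝒪_K^× = 𝒪_K. Then 𝒪 is half-factorial if and only if every irreducible element of 𝒪 is an irreducible element of 𝒪_K. -/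
open NumberField

set_option synthInstance.maxHeartbeats 1000000
set_option maxHeartbeats 1000000

variable {K : Type*} [Field K] [NumberField K]

open UniqueFactorizationMonoid
open scoped nonZeroDivisors

/-!
If `𝒪` is half-factorial and an irreducible `a` of `𝒪` factors as `a = (ε b)(δ c)` in `𝒪_K`
with `ε, δ` units of `𝒪_K` and `b, c ∈ 𝒪` nonunits, then some power `(εδ)^m` is a unit `v` of
`𝒪`, because the units of `𝒪_K` modulo the (nonzero) conductor form a finite group. Then
`a^m = (v b^m) c^m` has a factorization of length at least `m + 1` besides `a ⋯ a`.

Conversely, when the class number of `𝒪_K` is at most 2, the ideal `(π)` of an irreducible `π`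
of `𝒪_K` is either a principal prime or the product of two non-principal primes. So the number
of prime ideal factors of `(x)`, principal ones counted twice, is twice the length of any
factorization of `x` into irreducibles of `𝒪_K`, hence also of any factorization in `𝒪` once
irreducibles of `𝒪` stay irreducible in `𝒪_K`.
-/

section Factorization

variable {α : Type*} [CommMonoidWithZero α] [WfDvdMonoid α]

theorem WfDvdMonoid.exists_irreducible_factors_prod_eq {a : α} (ha : a ≠ 0) (hu : ¬IsUnit a) :
    ∃ f : Multiset α, (∀ b ∈ f, Irreducible b) ∧ f.prod = a := by
  obtain ⟨f, hf, u, rfl⟩ := WfDvdMonoid.exists_factors a ha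
  obtain ⟨b, hb⟩ := Multiset.exists_mem_of_ne_zero (by rintro rfl; simp at hu : f ≠ 0)
  obtain ⟨g, rfl⟩ := Multiset.exists_cons_of_mem hb
  refine ⟨(b * u) ::ₘ g, fun x hx => ?_, by simp [mul_right_comm]⟩
  rcases Multiset.mem_cons.mp hx with rfl | hx
  · exact (irreducible_mul_units u).mpr (hf b hb)
  · exact hf x (Multiset.mem_cons_of_mem hx)

theorem WfDvdMonoid.exists_irreducible_factors_prod_eq_card_le {l : Multiset α}
    (h0 : ∀ x ∈ l, x ≠ 0) (hu : ∀ x ∈ l, ¬IsUnit x) :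
    ∃ f : Multiset α, (∀ b ∈ f, Irreducible b) ∧ f.prod = l.prod ∧
      Multiset.card l ≤ Multiset.card f := by
  induction l using Multiset.induction_on with
  | empty => exact ⟨0, by simp⟩
  | cons x l ih =>
    obtain ⟨f, hf, hfl, hcard⟩ := ih (fun y hy => h0 y (Multiset.mem_cons_of_mem hy))
      (fun y hy => hu y (Multiset.mem_cons_of_mem hy))
    have hx0 := h0 x (Multiset.mem_cons_self x l)
    have hxu := hu x (Multiset.mem_cons_self x l)
    obtain ⟨g, hg, rfl⟩ := exists_irreducible_factors_prod_eq hx0 hxu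
    have hg0 : g ≠ 0 := by rintro rfl; simp at hxu
    refine ⟨g + f, fun b hb => ?_, by simp [hfl], ?_⟩
    · rcases Multiset.mem_add.mp hb with hb | hb
      exacts [hg b hb, hf b hb]
    · have := Multiset.card_pos.mpr hg0
      simp only [Multiset.card_cons, Multiset.card_add]
      omega

end Factorization

theorem IsHalfFactorialRing.card_le_of_prod_eq {R : Type*} [CommRing R] [WfDvdMonoid R]
    (hR : IsHalfFactorialRing R) {l f : Multiset R} (hl : ∀ x ∈ l, ¬IsUnit x)
    (h0 : l.prod ≠ 0) (hf : ∀ b ∈ f, Irreducible b) (hfl : f.prod = l.prod) :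
    Multiset.card l ≤ Multiset.card f := by
  obtain rfl | ⟨x, hx⟩ := l.empty_or_exists_mem
  · simp
  have hlu : ¬IsUnit l.prod := fun h => hl x hx (isUnit_of_dvd_unit (Multiset.dvd_prod hx) h)
  obtain ⟨g, hg, hgl, hcard⟩ := WfDvdMonoid.exists_irreducible_factors_prod_eq_card_le
    (fun y hy h => h0 (Multiset.prod_eq_zero (h ▸ hy))) hl
  exact hcard.trans_eq (hR.2 _ h0 hlu g f hg hf hgl hfl)

theorem mul_eq_one_of_ne_one_of_card_le_two {G : Type*} [Group G] [Finite G]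
    (hG : Nat.card G ≤ 2) {g h : G} (hg : g ≠ 1) (hh : h ≠ 1) : g * h = 1 := by
  have : Nontrivial G := ⟨⟨g, 1, hg⟩⟩
  have hG2 : Nat.card G = 2 := le_antisymm hG (Finite.one_lt_card_iff_nontrivial.mpr this)
  obtain ⟨y, -, hy⟩ := (Nat.card_eq_two_iff' (1 : G)).mp hG2
  rw [mul_eq_one_iff_inv_eq, hy g⁻¹ (inv_ne_one.mpr hg), hy h hh]

theorem Irreducible.eq_span_of_isPrincipal_dvd {R : Type*} [CommRing R] [IsDomain R] {π : R}
    (hπ : Irreducible π) {J : Ideal R} (hJ : J.IsPrincipal) (hJ1 : J ≠ ⊤)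
    (hJπ : J ∣ Ideal.span {π}) : J = Ideal.span {π} := by
  obtain ⟨d, rfl⟩ := hJ
  obtain ⟨c, hc⟩ :=
    Ideal.mem_span_singleton.mp (Ideal.le_of_dvd hJπ (Ideal.mem_span_singleton_self π))
  rcases hπ.isUnit_or_isUnit hc with hd | hc'
  · exact absurd (Ideal.span_singleton_eq_top.mpr hd) hJ1
  · exact Ideal.span_singleton_eq_span_singleton.mpr ⟨hc'.unit, hc.symm⟩

section Carlitz

variable {R : Type*} [CommRing R] [IsDedekindDomain R]

theorem Ideal.isPrincipal_mul_of_not_isPrincipal [Finite (ClassGroup R)]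
    (hR : Nat.card (ClassGroup R) ≤ 2) {P Q : Ideal R} (hP0 : P ≠ ⊥) (hQ0 : Q ≠ ⊥)
    (hP : ¬P.IsPrincipal) (hQ : ¬Q.IsPrincipal) : (P * Q).IsPrincipal := by
  let P' : (Ideal R)⁰ := ⟨P, mem_nonZeroDivisors_of_ne_zero hP0⟩
  let Q' : (Ideal R)⁰ := ⟨Q, mem_nonZeroDivisors_of_ne_zero hQ0⟩
  have h := mul_eq_one_of_ne_one_of_card_le_two hR (g := ClassGroup.mk0 P')
    (h := ClassGroup.mk0 Q') (fun h => hP ((ClassGroup.mk0_eq_one_iff _).mp h))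
    (fun h => hQ ((ClassGroup.mk0_eq_one_iff _).mp h))
  rw [← map_mul] at h
  exact (ClassGroup.mk0_eq_one_iff (P' * Q').2).mp h

open Classical in
/-- When the class number is at most 2, twice the length of every factorization of `a` into
irreducibles. -/
noncomputable def carlitzLength (a : R) : ℕ :=
  ((normalizedFactors (Ideal.span {a})).map fun P => if P.IsPrincipal then 2 else 1).sum

theorem carlitzLength_one : carlitzLength (1 : R) = 0 := by
  simp [carlitzLength, ← Ideal.one_eq_top]

theorem carlitzLength_mul {a b : R} (ha : a ≠ 0) (hb : b ≠ 0) :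
    carlitzLength (a * b) = carlitzLength a + carlitzLength b := by
  rw [carlitzLength, ← Ideal.span_singleton_mul_span_singleton,
    normalizedFactors_mul (by simpa using ha) (by simpa using hb), Multiset.map_add,
    Multiset.sum_add, carlitzLength, carlitzLength]

theorem card_normalizedFactors_span_irreducible [Finite (ClassGroup R)]
    (hR : Nat.card (ClassGroup R) ≤ 2) {π : R} (hπ : Irreducible π)
    (hF : ∀ P ∈ normalizedFactors (Ideal.span {π}), ¬P.IsPrincipal) :
    Multiset.card (normalizedFactors (Ideal.span {π})) = 2 := by
  set I := Ideal.span {π}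
  have hI0 : I ≠ ⊥ := by simpa [I] using hπ.ne_zero
  have hprod := Ideal.prod_normalizedFactors_eq_self hI0
  have hprime : ∀ P ∈ normalizedFactors I, Prime P := prime_of_normalized_factor
  obtain ⟨P, t, hPt⟩ : ∃ P t, normalizedFactors I = P ::ₘ t := by
    obtain ⟨P, hP⟩ := Multiset.exists_mem_of_ne_zero (s := normalizedFactors I) fun h => by
      simp only [h, Multiset.prod_zero, Ideal.one_eq_top] at hprod
      exact hπ.not_isUnit (Ideal.span_singleton_eq_top.mp hprod.symm)
    exact ⟨P, Multiset.exists_cons_of_mem hP⟩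
  have hP : P ∈ normalizedFactors I := by simp [hPt]
  obtain ⟨Q, r, rfl⟩ : ∃ Q r, t = Q ::ₘ r := by
    obtain ⟨Q, hQ⟩ := Multiset.exists_mem_of_ne_zero (s := t) fun ht => by
      rw [hPt, ht, Multiset.cons_zero, Multiset.prod_singleton] at hprod
      exact hF P hP (hprod ▸ ⟨π, rfl⟩)
    exact ⟨Q, Multiset.exists_cons_of_mem hQ⟩
  have hQ : Q ∈ normalizedFactors I := by simp [hPt]
  have hPQ : (P * Q).IsPrincipal := Ideal.isPrincipal_mul_of_not_isPrincipal hR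
    (hprime P hP).ne_zero (hprime Q hQ).ne_zero (hF P hP) (hF Q hQ)
  have hIPQ : P * Q = I := by
    refine hπ.eq_span_of_isPrincipal_dvd hPQ ?_ ⟨r.prod, ?_⟩
    · exact ne_top_of_le_ne_top (by simpa using (hprime Q hQ).ne_one) Ideal.mul_le_right
    · simpa [hPt, mul_assoc] using hprod.symm
  rw [← hIPQ, normalizedFactors_mul (hprime P hP).ne_zero (hprime Q hQ).ne_zero,
    normalizedFactors_irreducible (hprime P hP).irreducible,
    normalizedFactors_irreducible (hprime Q hQ).irreducible]
  simp

theorem carlitzLength_of_irreducible [Finite (ClassGroup R)] (hR : Nat.card (ClassGroup R) ≤ 2)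
    {π : R} (hπ : Irreducible π) : carlitzLength π = 2 := by
  by_cases h : ∃ P ∈ normalizedFactors (Ideal.span {π}), P.IsPrincipal
  · obtain ⟨P, hP, hPp⟩ := h
    have hPprime := prime_of_normalized_factor P hP
    have hPI : P = Ideal.span {π} := hπ.eq_span_of_isPrincipal_dvd hPp
      (by simpa using hPprime.ne_one) (dvd_of_mem_normalizedFactors hP)
    rw [carlitzLength, ← hPI, normalizedFactors_irreducible hPprime.irreducible, normalize_eq]
    simp [hPp]
  · push Not at h
    rw [carlitzLength, Multiset.map_congr rfl (fun P hP => if_neg (h P hP)), Multiset.map_const',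
      Multiset.sum_replicate, card_normalizedFactors_span_irreducible hR hπ h, smul_eq_mul]

theorem carlitzLength_multiset_prod [Finite (ClassGroup R)] (hR : Nat.card (ClassGroup R) ≤ 2)
    {l : Multiset R} (hl : ∀ b ∈ l, Irreducible b) :
    carlitzLength l.prod = 2 * Multiset.card l := by
  induction l using Multiset.induction_on with
  | empty => simpa using carlitzLength_one
  | cons b l ih =>
    have hb := hl b (Multiset.mem_cons_self b l)
    have hl' := fun x hx => hl x (Multiset.mem_cons_of_mem hx)
    rw [Multiset.prod_cons, carlitzLength_mul hb.ne_zero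
      (Multiset.prod_ne_zero fun h => (hl' 0 h).ne_zero rfl), carlitzLength_of_irreducible hR hb,
      ih hl', Multiset.card_cons]
    ring

end Carlitz

theorem isHalfFactorialRing_of_irreducible_map {R S : Type*} [CommRing R] [WfDvdMonoid R]
    [CommRing S] [IsDedekindDomain S] [Finite (ClassGroup S)] (hS : Nat.card (ClassGroup S) ≤ 2)
    (f : R →* S) (hf : ∀ a, Irreducible a → Irreducible (f a)) : IsHalfFactorialRing R := by
  have hlen : ∀ l : Multiset R, (∀ b ∈ l, Irreducible b) →
      carlitzLength (f l.prod) = 2 * Multiset.card l := fun l hl => by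
    rw [map_multiset_prod, ← Multiset.card_map f,
      carlitzLength_multiset_prod hS (by simpa using fun b hb => hf b (hl b hb))]
  refine ⟨fun a ha hu => WfDvdMonoid.exists_irreducible_factors_prod_eq ha hu, ?_⟩
  rintro a - - l₁ l₂ h₁ h₂ rfl h
  have := hlen l₂ h₂
  rw [h, hlen l₁ h₁] at this
  omega

theorem Subring.mem_of_mk_eq_one {S : Type*} [CommRing S] {O : Subring S} {I : Ideal S}
    (hI : ∀ x ∈ I, x ∈ O) {x : S} (hx : Ideal.Quotient.mk I x = 1) : x ∈ O := by
  have : x - 1 ∈ I := Ideal.Quotient.eq.mp (hx.trans (map_one _).symm)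
  simpa using O.add_mem O.one_mem (hI _ this)

instance Subring.isNoetherianRing {S : Type*} [CommRing S] [IsNoetherian ℤ S] (O : Subring S) :
    IsNoetherianRing O :=
  have : IsNoetherian ℤ O :=
    isNoetherian_of_injective O.subtype.toAddMonoidHom.toIntLinearMap Subtype.val_injective
  isNoetherianRing_iff.mpr (isNoetherian_of_tower ℤ this)

namespace Subring.IsOrder

variable {O : Subring (𝓞 K)}

theorem exists_intCast_mem_conductorIdeal (hO : O.IsOrder) :
    ∃ N : ℤ, N ≠ 0 ∧ (N : 𝓞 K) ∈ conductorIdeal O := by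
  choose n hn hmem using hO
  obtain ⟨s, hs⟩ := Module.finite_def.mp (inferInstance : Module.Finite ℤ (𝓞 K))
  refine ⟨∏ x ∈ s, n x, Finset.prod_ne_zero_iff.mpr fun x _ => hn x, fun x => ?_⟩
  have hx : x ∈ Submodule.span ℤ (s : Set (𝓞 K)) := by rw [hs]; trivial
  induction hx using Submodule.span_induction with
  | mem y hy =>
    obtain ⟨c, hc⟩ := Finset.dvd_prod_of_mem n hy
    rw [hc, Int.cast_mul, mul_right_comm]
    exact O.mul_mem (hmem y) (intCast_mem O c)
  | zero => simp
  | add y z _ _ hy hz => rw [mul_add]; exact O.add_mem hy hz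
  | smul z y _ hy =>
    rw [zsmul_eq_mul, mul_left_comm]
    exact O.mul_mem (intCast_mem O z) hy

theorem conductorIdeal_ne_bot (hO : O.IsOrder) : conductorIdeal O ≠ ⊥ := by
  obtain ⟨N, hN, hNmem⟩ := hO.exists_intCast_mem_conductorIdeal
  exact fun h => hN (Int.cast_eq_zero.mp ((Submodule.mem_bot ℤ).mp (h ▸ hNmem)))

theorem exists_pow_eq_coe_unit (hO : O.IsOrder) (u : (𝓞 K)ˣ) :
    ∃ m : ℕ, 0 < m ∧ ∃ v : Oˣ, ((v : O) : 𝓞 K) = u ^ m := by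
  have := Ideal.finiteQuotientOfFreeOfNeBot _ hO.conductorIdeal_ne_bot
  let red := Units.map (Ideal.Quotient.mk (conductorIdeal O)).toMonoidHom
  set m := orderOf (red u)
  have hpow : ∀ w : (𝓞 K)ˣ, red w ^ m = 1 → (w : 𝓞 K) ^ m ∈ O := fun w hw =>
    Subring.mem_of_mk_eq_one (I := conductorIdeal O) (fun x hx => by simpa using hx 1)
      (by simpa [red] using congrArg Units.val hw)
  have hu := hpow u (pow_orderOf_eq_one _)
  have hu' := hpow u⁻¹ (by rw [map_inv, inv_pow, pow_orderOf_eq_one, inv_one])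
  refine ⟨m, orderOf_pos _, ⟨⟨_, hu⟩, ⟨_, hu'⟩, ?_, ?_⟩, rfl⟩ <;>
    ext <;> simp [← mul_pow]

theorem isUnit_of_isUnit_coe (hO : O.IsOrder) {a : O} (ha : IsUnit (a : 𝓞 K)) : IsUnit a := by
  obtain ⟨u, hu⟩ := ha
  obtain ⟨m, hm, v, hv⟩ := hO.exists_pow_eq_coe_unit u
  have : a ^ m = v := Subtype.ext (by simp [hv, hu])
  exact (isUnit_pow_iff hm.ne').mp (this ▸ v.isUnit)

theorem irreducible_coe_of_isHalfFactorialRing (hO : O.IsOrder)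
    (hU : ∀ x : 𝓞 K, ∃ (ε : (𝓞 K)ˣ) (a : 𝓞 K), a ∈ O ∧ x = ε * a)
    (hHF : IsHalfFactorialRing O) {a : O} (ha : Irreducible a) : Irreducible (a : 𝓞 K) := by
  refine ⟨fun h => ha.not_isUnit (hO.isUnit_of_isUnit_coe h), fun x y hxy => ?_⟩
  by_contra! hxy'
  obtain ⟨ε, b, hb, rfl⟩ := hU x
  obtain ⟨δ, c, hc, rfl⟩ := hU y
  obtain ⟨m, hm, v, hv⟩ := hO.exists_pow_eq_coe_unit (ε * δ)
  let B : O := ⟨b, hb⟩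
  let C : O := ⟨c, hc⟩
  have hB : ¬IsUnit B := fun h => hxy'.1 ((Units.isUnit_units_mul ε b).mpr (h.map O.subtype))
  have hC : ¬IsUnit C := fun h => hxy'.2 ((Units.isUnit_units_mul δ c).mpr (h.map O.subtype))
  have hvB : ¬IsUnit (v * B ^ m) := fun h => hB (isUnit_pow_iff hm.ne'
    |>.mp ((Units.isUnit_units_mul v _).mp h))
  have hfac : (((v : O) * B ^ m) ::ₘ Multiset.replicate m C).prod = a ^ m := Subtype.ext <| by
    rw [Multiset.prod_cons, Multiset.prod_replicate]
    push_cast [hv, hxy]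
    ring
  have := hHF.card_le_of_prod_eq (l := (v * B ^ m) ::ₘ Multiset.replicate m C)
    (f := Multiset.replicate m a)
    (fun x hx => (Multiset.mem_cons.mp hx).elim (· ▸ hvB) (Multiset.eq_of_mem_replicate · ▸ hC))
    (hfac ▸ pow_ne_zero m ha.ne_zero) (fun x hx => Multiset.eq_of_mem_replicate hx ▸ ha)
    (by simp [hfac])
  simp at this

end Subring.IsOrder

/-- **Lemma 4.3.** If `|Pic 𝒪_K| ≤ 2` and `𝒪 · 𝒪_K^× = 𝒪_K`, then `𝒪` is half-factorial
if and only if every irreducible element of `𝒪` is an irreducible element of `𝒪_K`. -/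
theorem isHalfFactorial_iff_irreducible_mem_irreducible (O : Subring (𝓞 K)) (hO : O.IsOrder)
    (hPic : Nat.card (ClassGroup (𝓞 K)) ≤ 2)
    (hU : ∀ x : 𝓞 K, ∃ (ε : (𝓞 K)ˣ) (a : 𝓞 K), a ∈ O ∧ x = ε * a) :
    IsHalfFactorialRing O ↔ ∀ a : O, Irreducible a → Irreducible (a : 𝓞 K) :=
  ⟨fun hHF _ ha => hO.irreducible_coe_of_isHalfFactorialRing hU hHF ha,
    fun h => isHalfFactorialRing_of_irreducible_map hPic O.subtype.toMonoidHom h⟩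
end

section
/- Suppose 𝒪 is half-factorial and the spec-map is bijective. Let 𝔓 be a nonzero non-principal prime ideal of 𝒪_K containing the conductor 𝔣, and suppose there exists a ∈ 𝒪 with a·𝒪_K = 𝔓². Then no element of 𝔓³ ∩ 𝒪 is an irreducible element of 𝒪. -/
/-! Write `x = a t` with `t ∈ 𝔓`; then `t ^ (2j) ∈ 𝔓 ^ (2j) = a ^ j 𝒪_K`, say `t ^ (2j) = a ^ j s`.
A nonzero element `c` of the conductor, which lies in `𝔓` and so is a nonunit of `𝒪`, pulls this
into `𝒪`: `c x ^ (2j) = a ^ (3j) (c s)`. If `x` were irreducible, the left side would have a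
factorization of length `ℓ(c) + 2j`, where `ℓ(c)` is the length of any factorization of `c`, while
the right side is a product of `3j + 1` nonunits, so all its factorizations have length at least
`3j + 1`. For `j = ℓ(c)` this contradicts half-factoriality. -/

open NumberField

set_option synthInstance.maxHeartbeats 1000000
set_option maxHeartbeats 1000000

variable {K : Type*} [Field K] [NumberField K]

namespace IsHalfFactorialRing

variable {R : Type*} [CommRing R]

theorem exists_factorization_card_ge (hR : IsHalfFactorialRing R) (m : Multiset R)
    (hm : ∀ b ∈ m, b ≠ 0 ∧ ¬IsUnit b) :
    ∃ l : Multiset R, (∀ b ∈ l, Irreducible b) ∧ l.prod = m.prod ∧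
      Multiset.card m ≤ Multiset.card l := by
  induction m using Multiset.induction_on with
  | empty => exact ⟨0, by simp, rfl, le_rfl⟩
  | cons b m ih =>
    obtain ⟨hb0, hbu⟩ := hm b (Multiset.mem_cons_self b m)
    obtain ⟨lb, hlb, rfl⟩ := hR.1 _ hb0 hbu
    obtain ⟨l, hl, hprod, hcard⟩ := ih fun y hy => hm y (Multiset.mem_cons_of_mem hy)
    have hlb_pos : 0 < Multiset.card lb :=
      Multiset.card_pos.mpr fun h => hbu (by simp [h])
    refine ⟨lb + l, ?_, by rw [Multiset.prod_add, hprod, Multiset.prod_cons], ?_⟩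
    · intro y hy
      exact (Multiset.mem_add.mp hy).elim (hlb y) (hl y)
    · rw [Multiset.card_add, Multiset.card_cons]
      omega

theorem card_le_card_of_prod_eq [IsDomain R] (hR : IsHalfFactorialRing R) {l m : Multiset R}
    (hl : ∀ b ∈ l, Irreducible b) (hm : ∀ b ∈ m, ¬IsUnit b) (h : l.prod = m.prod) :
    Multiset.card m ≤ Multiset.card l := by
  obtain rfl | ⟨b, hb⟩ := m.empty_or_exists_mem
  · simp
  have hprod0 : m.prod ≠ 0 := h ▸ Multiset.prod_ne_zero fun h0 => (hl 0 h0).ne_zero rfl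
  have hprod_nu : ¬IsUnit m.prod := fun hu => hm b hb (isUnit_of_dvd_unit (Multiset.dvd_prod hb) hu)
  obtain ⟨l', hl', hprod', hcard⟩ := hR.exists_factorization_card_ge m fun b hb =>
    ⟨fun hb0 => hprod0 (Multiset.prod_eq_zero (hb0 ▸ hb)), hm b hb⟩
  rwa [hR.2 _ hprod0 hprod_nu l l' hl hl' h hprod']

theorem not_irreducible_of_forall_mul_pow_eq [IsDomain R] (hR : IsHalfFactorialRing R)
    {a c x : R} (hc0 : c ≠ 0) (hc : ¬IsUnit c) (ha : ¬IsUnit a)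
    (h : ∀ j, ∃ k d, ¬IsUnit d ∧ c * x ^ k = a ^ (k + j) * d) : ¬Irreducible x := by
  intro hx
  obtain ⟨lc, hlc, hlc_prod⟩ := hR.1 c hc0 hc
  obtain ⟨k, d, hd, hcx⟩ := h (Multiset.card lc)
  have hcard := hR.card_le_card_of_prod_eq (l := lc + Multiset.replicate k x)
    (m := Multiset.replicate (k + Multiset.card lc) a + {d})
    (by
      simp only [Multiset.mem_add, Multiset.mem_replicate]
      rintro b (hb | ⟨-, rfl⟩)
      exacts [hlc b hb, hx])
    (by
      simp only [Multiset.mem_add, Multiset.mem_replicate, Multiset.mem_singleton]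
      rintro b (⟨-, rfl⟩ | rfl)
      exacts [ha, hd])
    (by simp only [Multiset.prod_add, Multiset.prod_replicate, Multiset.prod_singleton, hlc_prod, hcx])
  simp only [Multiset.card_add, Multiset.card_replicate, Multiset.card_singleton] at hcard
  omega

end IsHalfFactorialRing

theorem Subring.not_isUnit_of_coe_mem {R : Type*} [CommRing R] {S : Subring R} {I : Ideal R}
    (hI : I ≠ ⊤) {e : S} (he : (e : R) ∈ I) : ¬IsUnit e :=
  fun hu => hI (Ideal.eq_top_of_isUnit_mem I he (hu.map S.subtype))

theorem Ideal.pow_dvd_pow_two_mul_of_span_eq_sq {R : Type*} [CommRing R] {P : Ideal R} {a t : R}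
    (ha : Ideal.span {a} = P ^ 2) (ht : t ∈ P) (j : ℕ) : a ^ j ∣ t ^ (2 * j) := by
  rw [← Ideal.mem_span_singleton, ← Ideal.span_singleton_pow, ha, ← pow_mul]
  exact Ideal.pow_mem_pow ht _

theorem not_irreducible_of_mem_cube_general (O : Subring (𝓞 K)) (hO : O.IsOrder)
    (hhf : IsHalfFactorialRing O)
    (P : Ideal (𝓞 K)) (hP : P.IsPrime) (hPf : conductorIdeal O ≤ P)
    (a : 𝓞 K) (haO : a ∈ O) (ha : Ideal.span {a} = P ^ 2) :
    ∀ (x : 𝓞 K) (hx : x ∈ O), x ∈ P ^ 3 → ¬ Irreducible (⟨x, hx⟩ : O) := by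
  intro x hx hx3
  obtain ⟨t, htP, rfl⟩ : ∃ t ∈ P, a * t = x :=
    Ideal.mem_span_singleton_mul.mp (by rwa [ha, ← pow_succ])
  obtain ⟨c, hcf, hc0⟩ := Submodule.exists_mem_ne_zero_of_ne_bot (conductorIdeal_ne_bot hO)
  have hnu (e : O) : (e : 𝓞 K) ∈ P → ¬IsUnit e := Subring.not_isUnit_of_coe_mem hP.ne_top
  have haP : a ∈ P := Ideal.pow_le_self two_ne_zero (ha ▸ Ideal.mem_span_singleton_self a)
  refine hhf.not_irreducible_of_forall_mul_pow_eq (c := ⟨c, mul_one c ▸ hcf 1⟩) (a := ⟨a, haO⟩)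
    (fun h => hc0 congr($h.1)) (hnu _ (hPf hcf)) (hnu _ haP) fun j => ?_
  obtain ⟨s, hs⟩ := Ideal.pow_dvd_pow_two_mul_of_span_eq_sq ha htP j
  refine ⟨2 * j, ⟨c * s, hcf s⟩, hnu _ (P.mul_mem_right s (hPf hcf)), Subtype.ext ?_⟩
  change c * (a * t) ^ (2 * j) = a ^ (2 * j + j) * (c * s)
  rw [mul_pow, hs]
  ring

/-- If `𝒪` is half-factorial, the spec-map is bijective, `𝔓 ⊇ 𝔣` is a nonzero
non-principal prime of `𝒪_K` and some `a ∈ 𝒪` satisfies `a𝒪_K = 𝔓²`, then no element of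
`𝔓³ ∩ 𝒪` is irreducible in `𝒪`. -/
theorem not_irreducible_of_mem_cube (O : Subring (𝓞 K)) (hO : O.IsOrder)
    (hhf : IsHalfFactorialRing O) (hspec : SpecMapBijective O)
    (P : Ideal (𝓞 K)) (hP : P.IsPrime) (hPbot : P ≠ ⊥) (hPf : conductorIdeal O ≤ P)
    (hPnp : ¬ P.IsPrincipal)
    (a : 𝓞 K) (haO : a ∈ O) (ha : Ideal.span {a} = P ^ 2) :
    ∀ (x : 𝓞 K) (hx : x ∈ O), x ∈ P ^ 3 → ¬ Irreducible (⟨x, hx⟩ : O) :=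
  not_irreducible_of_mem_cube_general O hO hhf P hP hPf a haO ha
end
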